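/- Let p be an odd prime, h ≥ h₀ ≥ 1 integers, and u an integer coprime to p. Write u = [u]⟨u⟩ with [u] ∈ μ_{p−1}(Z_p) and ⟨u⟩ ∈ 1 + pZ_p (Teichmüller decomposition). Then ⟨u⟩ ≡ 1 (mod p^{h−h₀}) if and only if there exist ξ ∈ (Z/p^h Z)^× with ξ^{p−1} = 1 and an integer a with 0 ≤ a ≤ p^{h₀} − 1 such that u ≡ ξ(1 + a p^{h−h₀}) (mod p^h). -/

import Mathlib

/-!
If `p ∣ x - 1` then `p^(m+1) ∣ x^(p^m) - 1`, so in a ring with `p^m = 0` a `(p-1)`-st root of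
unity that is `≡ 1 (mod p)` is also a `p^m`-th root of unity, hence equals `1` because `p^m` and
`p - 1` are coprime. If `u ≡ ξ(1 + a p^(h-h₀)) (mod p^h)`, then `u` is a `(p-1)`-st root of unity
mod `p^(h-h₀)`, hence so is `⟨u⟩ = u / [u]`, which therefore is `1` there. Conversely, if
`⟨u⟩ = 1 + p^(h-h₀) t`, take for `ξ` and `a` the reductions of `[u]` mod `p^h` and of `t` mod `p^h₀`.
-/

theorem eq_one_of_pow_sub_one_eq_one_of_dvd_sub_one {R : Type*} [CommRing R] {p m : ℕ}
    (hp : p ≠ 0) (hpm : (p : R) ^ m = 0) {x : R} (hx : x ^ (p - 1) = 1)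
    (hdvd : (p : R) ∣ x - 1) : x = 1 := by
  have hx_pow : x ^ p ^ m = 1 := by
    have := dvd_sub_pow_of_dvd_sub hdvd m
    rwa [pow_succ, hpm, zero_mul, zero_dvd_iff, one_pow, sub_eq_zero] at this
  have hcop : (p ^ m).Coprime (p - 1) :=
    ((Nat.coprime_self_sub_right (Nat.one_le_iff_ne_zero.mpr hp)).mpr
      (Nat.coprime_one_right p)).pow_left m
  exact (pow_eq_one_iff_of_coprime hcop).mp ⟨hx_pow, hx⟩

theorem ZMod.natCast_pow_self_eq_zero (n k : ℕ) : (n : ZMod (n ^ k)) ^ k = 0 := by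
  rw [← Nat.cast_pow, ZMod.natCast_self]

namespace PadicInt

variable {p : ℕ} [Fact p.Prime]

theorem toZModPow_eq_zero_iff {n : ℕ} {x : ℤ_[p]} :
    toZModPow n x = 0 ↔ (p : ℤ_[p]) ^ n ∣ x := by
  rw [← RingHom.mem_ker, ker_toZModPow, Ideal.mem_span_singleton]

theorem exists_toZModPow_eq_one_add_mul_pow {w : ℤ_[p]} {k n : ℕ} (hkn : k ≤ n)
    (hw : (p : ℤ_[p]) ^ k ∣ w - 1) :
    ∃ a : ℕ, a < p ^ (n - k) ∧ toZModPow n w = 1 + a * (p : ZMod (p ^ n)) ^ k := by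
  obtain ⟨t, ht⟩ := hw
  obtain ⟨s, hs⟩ := Ideal.mem_span_singleton.mp (appr_spec (n - k) t)
  refine ⟨t.appr (n - k), appr_lt t (n - k), ?_⟩
  have hdvd : (p : ℤ_[p]) ^ n ∣ w - (1 + t.appr (n - k) * (p : ℤ_[p]) ^ k) :=
    ⟨s, by
      rw [show (p : ℤ_[p]) ^ n = p ^ k * p ^ (n - k) by rw [← pow_add, Nat.add_sub_cancel' hkn]]
      linear_combination ht + (p : ℤ_[p]) ^ k * hs⟩
  rw [← toZModPow_eq_zero_iff, map_sub, sub_eq_zero] at hdvd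
  simpa using hdvd

theorem pow_dvd_sub_one_of_toZModPow_mul_pow_eq_one {v w : ℤ_[p]} (k : ℕ)
    (hv : v ^ (p - 1) = 1) (hw : (p : ℤ_[p]) ∣ w - 1)
    (hvw : toZModPow k (v * w) ^ (p - 1) = 1) : (p : ℤ_[p]) ^ k ∣ w - 1 := by
  have hw_pow : toZModPow k w ^ (p - 1) = 1 := by
    rwa [map_mul, mul_pow, ← map_pow, hv, map_one, one_mul] at hvw
  have hw_dvd : (p : ZMod (p ^ k)) ∣ toZModPow k w - 1 := by
    simpa using map_dvd (toZModPow k) hw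
  rw [← toZModPow_eq_zero_iff, map_sub, map_one, sub_eq_zero]
  exact eq_one_of_pow_sub_one_eq_one_of_dvd_sub_one (Fact.out : p.Prime).ne_zero
    (ZMod.natCast_pow_self_eq_zero p k) hw_pow hw_dvd

end PadicInt

theorem stmt_14_general (p : ℕ)
    (h h₀ : ℕ) (hhh : h₀ ≤ h)
    [Fact p.Prime]
    (u : ℤ)
    (v w : ℤ_[p]) (hv : v ^ (p - 1) = 1) (hw : (p : ℤ_[p]) ∣ (w - 1))
    (huvw : (u : ℤ_[p]) = v * w) :
    ((p : ℤ_[p]) ^ (h - h₀) ∣ (w - 1)) ↔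
      ∃ ξ : ZMod (p ^ h), ξ ^ (p - 1) = 1 ∧
        ∃ a : ℕ, a ≤ p ^ h₀ - 1 ∧
          (u : ZMod (p ^ h)) = ξ * (1 + (a : ZMod (p ^ h)) * (p : ZMod (p ^ h)) ^ (h - h₀)) := by
  constructor
  · intro hk
    obtain ⟨a, ha, hwa⟩ := PadicInt.exists_toZModPow_eq_one_add_mul_pow (Nat.sub_le h h₀) hk
    rw [Nat.sub_sub_self hhh] at ha
    refine ⟨PadicInt.toZModPow h v, by rw [← map_pow, hv, map_one], a, by omega, ?_⟩
    rw [← map_intCast (PadicInt.toZModPow h), huvw, map_mul, hwa]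
  · rintro ⟨ξ, hξ, a, -, hua⟩
    refine PadicInt.pow_dvd_sub_one_of_toZModPow_mul_pow_eq_one (h - h₀) hv hw ?_
    have hu_root :=
      congr_arg (ZMod.castHom (pow_dvd_pow p (Nat.sub_le h h₀)) (ZMod (p ^ (h - h₀)))) hua
    simp only [map_intCast, map_mul, map_add, map_one, map_natCast, map_pow,
      ZMod.natCast_pow_self_eq_zero, mul_zero, add_zero, mul_one] at hu_root
    rw [← huvw, map_intCast, hu_root, ← map_pow, hξ, map_one]

/-- Teichmüller decomposition criterion: writing `u = [u]⟨u⟩` in `ℤ_p` with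
`[u]^(p-1) = 1` and `⟨u⟩ ≡ 1 (mod p)`, one has `⟨u⟩ ≡ 1 (mod p^{h-h₀})` iff
`u ≡ ξ(1 + a p^{h-h₀}) (mod p^h)` for some `(p-1)`-st root of unity `ξ` in
`ℤ/p^h` and some `0 ≤ a ≤ p^{h₀} - 1`. -/
theorem stmt_14 (p : ℕ) (hp : p.Prime) (hodd : Odd p)
    (h h₀ : ℕ) (hh₀ : 1 ≤ h₀) (hhh : h₀ ≤ h)
    [Fact p.Prime]
    (u : ℤ) (hu : IsCoprime u (p : ℤ))
    (v w : ℤ_[p]) (hv : v ^ (p - 1) = 1) (hw : (p : ℤ_[p]) ∣ (w - 1))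
    (huvw : (u : ℤ_[p]) = v * w) :
    ((p : ℤ_[p]) ^ (h - h₀) ∣ (w - 1)) ↔
      ∃ ξ : ZMod (p ^ h), ξ ^ (p - 1) = 1 ∧
        ∃ a : ℕ, a ≤ p ^ h₀ - 1 ∧
          (u : ZMod (p ^ h)) = ξ * (1 + (a : ZMod (p ^ h)) * (p : ZMod (p ^ h)) ^ (h - h₀)) :=
  stmt_14_general p h h₀ hhh u v w hv hw huvw
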